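/- Let U, V ⊆ ℂ be open sets and let φ : V → U be holomorphic with nowhere-vanishing derivative. Let (Q_n)_{n≥0} be holomorphic functions on U, and define transformed potentials (Q̃_n)_{n≥0} on V by Q̃_n(z̃) = Q_n(φ(z̃))·φ'(z̃)² for all n ≠ 2, and Q̃₂(z̃) = Q₂(φ(z̃))·φ'(z̃)² − (1/2)·{φ}(z̃), where {φ} is the Schwarzian derivative of φ. Let s : U → ℂ be a nowhere-vanishing holomorphic square root of Q₀, and set s̃(z̃) = s(φ(z̃))·φ'(z̃), which is a nowhere-vanishing holomorphic square root of Q̃₀ on V. Let (S_n⁺) and (S_n⁻) be the WKB families for (Q_n) on U with leading terms s and −s respectively, and let (S̃_n⁺) and (S̃_n⁻) be the WKB families for (Q̃_n) on V with leading terms s̃ and −s̃ respectively. Then for every n ≥ −1 and every z̃ ∈ V: S̃_n⁺(z̃) − S̃_n⁻(z̃) = (S_n⁺(φ(z̃)) − S_n⁻(φ(z̃)))·φ'(z̃). Equivalently, the odd part satisfies S̃_{odd,n}(z̃) = S_{odd,n}(φ(z̃))·φ'(z̃) for all n, i.e. S_odd(z,ħ)dz transforms as a 1-form. -/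

import Mathlib

/-!
Under `z = φ(z̃)` the pulled-back coefficients `S̃_n = (S_n ∘ φ)·φ'`, corrected at `n = 0` by
`-(1/2)·φ''/φ'`, again satisfy the WKB recursion for the transformed potentials: the correction
absorbs the Schwarzian term of `Q̃₂`, since `(1/2)(φ''/φ')' − (1/4)(φ''/φ')² = (1/2){φ}`. A WKB
family is determined by its leading term, which is nowhere zero, so `S̃^±` are these pulled-back
families; the correction is the same for both signs and cancels in `S̃⁺ − S̃⁻`.
-/

/-- The Schwarzian derivative of a holomorphic function `f`:
`{f}(z) = (f''/f')'(z) − (1/2)·(f''(z)/f'(z))²`. -/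
noncomputable def schwarzian (f : ℂ → ℂ) (z : ℂ) : ℂ :=
  deriv (fun w => deriv (deriv f) w / deriv f w) z
    - (1 / 2) * (deriv (deriv f) z / deriv f z) ^ 2

/-- A WKB family for the potentials `(Q_n)_{n≥0}` with leading term `s` on `U`.
Here `S k` represents the coefficient `S_{k−1}` of the paper (indices shifted by one,
so that `S 0 = S_{−1} = s`). -/
def WKBFamily (U : Set ℂ) (Q : ℕ → ℂ → ℂ) (s : ℂ → ℂ) (S : ℕ → ℂ → ℂ) : Prop :=
  (∀ k, DifferentiableOn ℂ (S k) U) ∧ Set.EqOn (S 0) s U ∧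
    ∀ k : ℕ, ∀ z ∈ U,
      2 * S 0 z * S (k + 1) z
          + (∑ a ∈ Finset.range k, S (a + 1) z * S (k - a) z)
          + deriv (S k) z
        = Q (k + 1) z

open Set Finset

noncomputable def preSchwarzian (f : ℂ → ℂ) (z : ℂ) : ℂ :=
  deriv (deriv f) z / deriv f z

theorem schwarzian_eq_deriv_preSchwarzian (f : ℂ → ℂ) (z : ℂ) :
    schwarzian f z = deriv (preSchwarzian f) z - 1 / 2 * preSchwarzian f z ^ 2 :=
  rfl

theorem preSchwarzian_mul_deriv {f : ℂ → ℂ} {z : ℂ} (hf : deriv f z ≠ 0) :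
    preSchwarzian f z * deriv f z = deriv (deriv f) z :=
  div_mul_cancel₀ _ hf

theorem AnalyticAt.differentiableAt_preSchwarzian {f : ℂ → ℂ} {z : ℂ} (hf : AnalyticAt ℂ f z)
    (hf' : deriv f z ≠ 0) : DifferentiableAt ℂ (preSchwarzian f) z :=
  hf.deriv.deriv.differentiableAt.div hf.deriv.differentiableAt hf'

theorem hasDerivAt_comp_mul_deriv {𝕜 : Type*} [NontriviallyNormedField 𝕜] {f φ : 𝕜 → 𝕜}
    {z : 𝕜} (hf : DifferentiableAt 𝕜 f (φ z)) (hφ : DifferentiableAt 𝕜 φ z)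
    (hφ' : DifferentiableAt 𝕜 (deriv φ) z) :
    HasDerivAt (fun w => f (φ w) * deriv φ w)
      (deriv f (φ z) * deriv φ z ^ 2 + f (φ z) * deriv (deriv φ) z) z :=
  ((hf.hasDerivAt.comp z hφ.hasDerivAt).mul hφ'.hasDerivAt).congr_deriv
    (by rw [Function.comp_apply]; ring)

/-- The coefficients of a WKB family after the change of coordinate `z = φ(z̃)`; the shifted
index `k = 1` is the paper's `S_0`. -/
noncomputable def wkbPullback (φ : ℂ → ℂ) (S : ℕ → ℂ → ℂ) (k : ℕ) (z : ℂ) : ℂ :=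
  S k (φ z) * deriv φ z - if k = 1 then preSchwarzian φ z / 2 else 0

theorem wkbPullback_of_ne_one (φ : ℂ → ℂ) (S : ℕ → ℂ → ℂ) {k : ℕ} (hk : k ≠ 1) (z : ℂ) :
    wkbPullback φ S k z = S k (φ z) * deriv φ z := by
  simp [wkbPullback, hk]

theorem wkbPullback_one (φ : ℂ → ℂ) (S : ℕ → ℂ → ℂ) (z : ℂ) :
    wkbPullback φ S 1 z = S 1 (φ z) * deriv φ z - preSchwarzian φ z / 2 := by
  simp [wkbPullback]

/-- For `k ≥ 2` only the two terms containing the index `1` see the correction. -/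
theorem sum_wkbPullback_mul_wkbPullback (φ : ℂ → ℂ) (S : ℕ → ℂ → ℂ) (m : ℕ) (z : ℂ) :
    ∑ a ∈ range (m + 2), wkbPullback φ S (a + 1) z * wkbPullback φ S (m + 2 - a) z
      = deriv φ z ^ 2 * ∑ a ∈ range (m + 2), S (a + 1) (φ z) * S (m + 2 - a) (φ z)
        - preSchwarzian φ z * deriv φ z * S (m + 2) (φ z) := by
  have hmiddle : ∀ a ∈ range m,
      wkbPullback φ S (a + 1 + 1) z * wkbPullback φ S (m + 2 - (a + 1)) z
        = deriv φ z ^ 2 * (S (a + 1 + 1) (φ z) * S (m + 2 - (a + 1)) (φ z)) := by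
    intro a ha
    have ha : a < m := mem_range.mp ha
    rw [wkbPullback_of_ne_one φ S (by omega), wkbPullback_of_ne_one φ S (by omega)]
    ring
  rw [sum_range_succ', sum_range_succ, sum_range_succ', sum_range_succ, sum_congr rfl hmiddle,
    ← mul_sum, Nat.sub_zero, show m + 2 - (m + 1) = 1 by omega,
    show m + 1 + 1 = m + 2 from rfl, zero_add, wkbPullback_one,
    wkbPullback_of_ne_one φ S (by omega : m + 2 ≠ 1)]
  ring

section Pullback

variable {U V : Set ℂ} {φ : ℂ → ℂ}

theorem hasDerivAt_wkbPullback (hU : IsOpen U) (hV : IsOpen V) (hφ : DifferentiableOn ℂ φ V)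
    (hmaps : MapsTo φ V U) (hφ' : ∀ z ∈ V, deriv φ z ≠ 0) {S : ℕ → ℂ → ℂ}
    (hS : ∀ k, DifferentiableOn ℂ (S k) U) (k : ℕ) {z : ℂ} (hz : z ∈ V) :
    HasDerivAt (wkbPullback φ S k)
      (deriv (S k) (φ z) * deriv φ z ^ 2 + S k (φ z) * deriv (deriv φ) z
        - if k = 1 then deriv (preSchwarzian φ) z / 2 else 0) z := by
  have hφz : AnalyticAt ℂ φ z := hφ.analyticOnNhd hV z hz
  have hmain := hasDerivAt_comp_mul_deriv ((hS k).differentiableAt (hU.mem_nhds (hmaps hz)))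
    hφz.differentiableAt hφz.deriv.differentiableAt
  by_cases hk : k = 1
  · subst hk
    rw [show wkbPullback φ S 1 = _ from funext (wkbPullback_one φ S), if_pos rfl]
    exact hmain.sub ((hφz.differentiableAt_preSchwarzian (hφ' z hz)).hasDerivAt.div_const 2)
  · rw [show wkbPullback φ S k = _ from funext (wkbPullback_of_ne_one φ S hk), if_neg hk,
      sub_zero]
    exact hmain

theorem WKBFamily.pullback (hU : IsOpen U) (hV : IsOpen V) (hφ : DifferentiableOn ℂ φ V)
    (hmaps : MapsTo φ V U) (hφ' : ∀ z ∈ V, deriv φ z ≠ 0) {Q Qt : ℕ → ℂ → ℂ}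
    (hQt : ∀ n, n ≠ 2 → ∀ z ∈ V, Qt n z = Q n (φ z) * deriv φ z ^ 2)
    (hQt2 : ∀ z ∈ V, Qt 2 z = Q 2 (φ z) * deriv φ z ^ 2 - 1 / 2 * schwarzian φ z)
    {s st : ℂ → ℂ} (hst : ∀ z ∈ V, st z = s (φ z) * deriv φ z) {S : ℕ → ℂ → ℂ}
    (hS : WKBFamily U Q s S) : WKBFamily V Qt st (wkbPullback φ S) := by
  obtain ⟨hSd, hS0, hrec⟩ := hS
  have hderiv k {z} (hz : z ∈ V) :=
    hasDerivAt_wkbPullback hU hV hφ hmaps hφ' hSd k hz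
  refine ⟨fun k z hz => (hderiv k hz).differentiableAt.differentiableWithinAt,
    fun z hz => ?_, fun k z hz => ?_⟩
  · rw [wkbPullback_of_ne_one φ S zero_ne_one, hS0 (hmaps hz), hst z hz]
  have hrecz := hrec k (φ z) (hmaps hz)
  have hcancel := preSchwarzian_mul_deriv (hφ' z hz)
  rw [(hderiv k hz).deriv, wkbPullback_of_ne_one φ S zero_ne_one]
  rcases k with _ | _ | m
  · rw [hQt 1 (by norm_num) z hz, wkbPullback_one]
    simp only [range_zero, sum_empty, if_neg zero_ne_one] at hrecz ⊢
    linear_combination deriv φ z ^ 2 * hrecz - S 0 (φ z) * hcancel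
  · rw [hQt2 z hz, sum_range_one, wkbPullback_one, wkbPullback_of_ne_one φ S (by omega),
      schwarzian_eq_deriv_preSchwarzian]
    simp only [zero_add, sum_range_one, Nat.sub_zero, if_true] at hrecz ⊢
    linear_combination deriv φ z ^ 2 * hrecz - S 1 (φ z) * hcancel
  · rw [hQt (m + 3) (by omega) z hz, sum_wkbPullback_mul_wkbPullback,
      wkbPullback_of_ne_one φ S (by omega), if_neg (by omega)]
    linear_combination deriv φ z ^ 2 * hrecz - S (m + 2) (φ z) * hcancel

end Pullback

/-- The recursion at `k` determines `2 s S_{k+1}` from coefficients of lower index. -/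
theorem WKBFamily.eqOn {V : Set ℂ} (hV : IsOpen V) {Q : ℕ → ℂ → ℂ} {s : ℂ → ℂ}
    (hs : ∀ z ∈ V, s z ≠ 0) {S T : ℕ → ℂ → ℂ} (hS : WKBFamily V Q s S)
    (hT : WKBFamily V Q s T) (k : ℕ) : EqOn (S k) (T k) V := by
  induction k using Nat.strong_induction_on with
  | _ k ih =>
    rcases k with _ | n
    · exact hS.2.1.trans hT.2.1.symm
    intro z hz
    have hsum : ∑ a ∈ range n, S (a + 1) z * S (n - a) z
        = ∑ a ∈ range n, T (a + 1) z * T (n - a) z :=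
      sum_congr rfl fun a ha => by
        have ha : a < n := mem_range.mp ha
        rw [ih (a + 1) (by omega) hz, ih (n - a) (by omega) hz]
    have hderiv : deriv (S n) z = deriv (T n) z :=
      Filter.EventuallyEq.deriv_eq
        (Filter.eventuallyEq_of_mem (hV.mem_nhds hz) (ih n n.lt_succ_self))
    have hlead : 2 * s z * S (n + 1) z = 2 * s z * T (n + 1) z := by
      linear_combination hS.2.2 n z hz - hT.2.2 n z hz - hsum - hderiv
        - 2 * S (n + 1) z * hS.2.1 hz + 2 * T (n + 1) z * hT.2.1 hz
    exact mul_left_cancel₀ (mul_ne_zero two_ne_zero (hs z hz)) hlead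

theorem wkb_odd_part_transforms_as_one_form_general
    (U V : Set ℂ) (hU : IsOpen U) (hV : IsOpen V)
    (φ : ℂ → ℂ) (hφ : DifferentiableOn ℂ φ V) (hmaps : Set.MapsTo φ V U)
    (hφ' : ∀ z ∈ V, deriv φ z ≠ 0)
    (Q : ℕ → ℂ → ℂ)
    (Qt : ℕ → ℂ → ℂ)
    (hQt : ∀ n, n ≠ 2 → ∀ z ∈ V, Qt n z = Q n (φ z) * (deriv φ z) ^ 2)
    (hQt2 : ∀ z ∈ V, Qt 2 z = Q 2 (φ z) * (deriv φ z) ^ 2 - (1 / 2) * schwarzian φ z)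
    (s : ℂ → ℂ)
    (hs0 : ∀ z ∈ U, s z ≠ 0) (hs2 : ∀ z ∈ U, s z ^ 2 = Q 0 z)
    (st : ℂ → ℂ) (hst : ∀ z ∈ V, st z = s (φ z) * deriv φ z)
    (Sp Sm : ℕ → ℂ → ℂ)
    (hSp : WKBFamily U Q s Sp) (hSm : WKBFamily U Q (fun z => -(s z)) Sm)
    (Stp Stm : ℕ → ℂ → ℂ)
    (hStp : WKBFamily V Qt st Stp) (hStm : WKBFamily V Qt (fun z => -(st z)) Stm) :
    (∀ z ∈ V, st z ≠ 0 ∧ st z ^ 2 = Qt 0 z) ∧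
    (∀ k : ℕ, ∀ z ∈ V,
      Stp k z - Stm k z = (Sp k (φ z) - Sm k (φ z)) * deriv φ z) := by
  have hst0 : ∀ z ∈ V, st z ≠ 0 := fun z hz => by
    rw [hst z hz]; exact mul_ne_zero (hs0 _ (hmaps hz)) (hφ' z hz)
  refine ⟨fun z hz => ⟨hst0 z hz, ?_⟩, fun k z hz => ?_⟩
  · rw [hst z hz, hQt 0 two_ne_zero.symm z hz, mul_pow, hs2 _ (hmaps hz)]
  have hp := hStp.eqOn hV hst0 (hSp.pullback hU hV hφ hmaps hφ' hQt hQt2 hst) k hz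
  have hm := hStm.eqOn hV (fun z hz => neg_ne_zero.mpr (hst0 z hz))
    (hSm.pullback hU hV hφ hmaps hφ' hQt hQt2 fun z hz => by simp [hst z hz]) k hz
  rw [hp, hm, wkbPullback, wkbPullback]
  ring

/-- The odd part `S_odd(z,ħ)dz` transforms as a 1-form under a holomorphic change of
coordinate `z = φ(z̃)`: with the transformed potentials `Q̃_n = (Q_n ∘ φ)·(φ')²` for
`n ≠ 2` and `Q̃₂ = (Q₂ ∘ φ)·(φ')² − (1/2){φ}`, and `s̃ = (s ∘ φ)·φ'`, the WKB families
satisfy `S̃_n⁺ − S̃_n⁻ = ((S_n⁺ − S_n⁻) ∘ φ)·φ'` for all `n ≥ −1` (shifted index `k`). -/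
theorem wkb_odd_part_transforms_as_one_form
    (U V : Set ℂ) (hU : IsOpen U) (hV : IsOpen V)
    (φ : ℂ → ℂ) (hφ : DifferentiableOn ℂ φ V) (hmaps : Set.MapsTo φ V U)
    (hφ' : ∀ z ∈ V, deriv φ z ≠ 0)
    (Q : ℕ → ℂ → ℂ) (hQ : ∀ n, DifferentiableOn ℂ (Q n) U)
    (Qt : ℕ → ℂ → ℂ)
    (hQt : ∀ n, n ≠ 2 → ∀ z ∈ V, Qt n z = Q n (φ z) * (deriv φ z) ^ 2)
    (hQt2 : ∀ z ∈ V, Qt 2 z = Q 2 (φ z) * (deriv φ z) ^ 2 - (1 / 2) * schwarzian φ z)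
    (s : ℂ → ℂ) (hs : DifferentiableOn ℂ s U)
    (hs0 : ∀ z ∈ U, s z ≠ 0) (hs2 : ∀ z ∈ U, s z ^ 2 = Q 0 z)
    (st : ℂ → ℂ) (hst : ∀ z ∈ V, st z = s (φ z) * deriv φ z)
    (Sp Sm : ℕ → ℂ → ℂ)
    (hSp : WKBFamily U Q s Sp) (hSm : WKBFamily U Q (fun z => -(s z)) Sm)
    (Stp Stm : ℕ → ℂ → ℂ)
    (hStp : WKBFamily V Qt st Stp) (hStm : WKBFamily V Qt (fun z => -(st z)) Stm) :
    (∀ z ∈ V, st z ≠ 0 ∧ st z ^ 2 = Qt 0 z) ∧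
    (∀ k : ℕ, ∀ z ∈ V,
      Stp k z - Stm k z = (Sp k (φ z) - Sm k (φ z)) * deriv φ z) :=
  wkb_odd_part_transforms_as_one_form_general U V hU hV φ hφ hmaps hφ' Q Qt hQt hQt2 s hs0 hs2 st
    hst Sp Sm hSp hSm Stp Stm hStp hStm
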